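/- The class of nearly-monadic disjunctive programs is closed under binary resolution: if C₁ and C₂ are rules of a nearly-monadic program (each either a 'monadic-head' rule whose head atoms all have the form A(z) or R(z,z) for a single variable z and which mentions only unary and binary predicates, or a role rule of the form R(x,y)→S(x,y) or R(x,y)→S(y,x)), and C is a binary resolvent of C₁ and C₂ where at least one of C₁, C₂ is non-Horn, then C is again of one of these two forms. -/

import Mathlib

/-- Atoms over unary predicates `PU` and binary predicates `PB`, with variable
arguments (rules are function-free and constant-free). -/
inductive NAt (PU PB V : Type) : Type
  | un : PU → V → NAt PU PB V
  | bin : PB → V → V → NAt PU PB V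
deriving DecidableEq

/-- A literal: a sign (`true` = positive, i.e. a head atom) and an atom. -/
abbrev NLit (PU PB V : Type) := Bool × NAt PU PB V

def substNAt {PU PB V : Type} (σ : V → V) : NAt PU PB V → NAt PU PB V
  | .un A v => .un A (σ v)
  | .bin R v w => .bin R (σ v) (σ w)

def substNLit {PU PB V : Type} (σ : V → V) (l : NLit PU PB V) : NLit PU PB V :=
  (l.1, substNAt σ l.2)

/-- A 'monadic-head' rule: every head (positive) atom is of the form `A(z)` or
`R(z,z)` for a variable `z` (and only unary/binary predicates are mentioned). -/
def MonadicHead {PU PB V : Type} (Cl : Finset (NLit PU PB V)) : Prop :=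
  ∀ l ∈ Cl, l.1 = true →
    (∃ (A : PU) (z : V), l.2 = NAt.un A z) ∨ (∃ (R : PB) (z : V), l.2 = NAt.bin R z z)

/-- A role rule: `R(x,y) → S(x,y)` or `R(x,y) → S(y,x)`. -/
def RoleRule {PU PB V : Type} [DecidableEq PU] [DecidableEq PB] [DecidableEq V]
    (Cl : Finset (NLit PU PB V)) : Prop :=
  ∃ (R S : PB) (x y : V), x ≠ y ∧
    (Cl = {(false, NAt.bin (PU := PU) R x y), (true, NAt.bin S x y)} ∨
     Cl = {(false, NAt.bin (PU := PU) R x y), (true, NAt.bin S y x)})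

/-- A clause is non-Horn if it has at least two positive literals. -/
def NonHorn {PU PB V : Type} [DecidableEq PU] [DecidableEq PB] [DecidableEq V]
    (Cl : Finset (NLit PU PB V)) : Prop :=
  1 < (Cl.filter fun l => l.1 = true).card

/-- `σ` is a most general unifier of atoms `A` and `B`. -/
def IsMGUN {PU PB V : Type} (σ : V → V) (A B : NAt PU PB V) : Prop :=
  substNAt σ A = substNAt σ B ∧
  ∀ τ : V → V, substNAt τ A = substNAt τ B → ∃ δ : V → V, ∀ v, δ (σ v) = τ v

/-- `Cl` is a binary resolvent of `C₁` and `C₂`. -/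
def Resolvent {PU PB V : Type} [DecidableEq PU] [DecidableEq PB] [DecidableEq V]
    (Cl C₁ C₂ : Finset (NLit PU PB V)) : Prop :=
  ∃ (A B : NAt PU PB V) (σ : V → V),
    (true, A) ∈ C₁ ∧ (false, B) ∈ C₂ ∧ IsMGUN σ A B ∧
    Cl = ((C₁.erase (true, A)) ∪ (C₂.erase (false, B))).image (substNLit σ)

/-! The resolvent is the `σ`-image of the parents minus the resolved literals, and substitution
keeps head atoms of the forms `A(z)`, `R(z,z)` in that form, so the resolvent is a monadic-head
rule as soon as both remainders are. A role rule is Horn, so at most one parent is a role rule.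
If it is `C₁`, resolution removes its only head. If it is `C₂`, its body `R(x,y)` is unified
with a head `A(z)` or `T(z,z)` of `C₁`, so `σ x = σ y` and its head becomes `S(σ x, σ x)`. -/

open Finset

namespace NAt

variable {PU PB V : Type}

def IsMonadic (a : NAt PU PB V) : Prop :=
  (∃ (A : PU) (z : V), a = un A z) ∨ (∃ (R : PB) (z : V), a = bin R z z)

theorem isMonadic_bin_iff {R : PB} {v w : V} : (bin (PU := PU) R v w).IsMonadic ↔ v = w := by
  simp [IsMonadic, eq_comm]

theorem IsMonadic.substNAt {a : NAt PU PB V} (h : a.IsMonadic) (σ : V → V) :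
    (substNAt σ a).IsMonadic := by
  rcases h with ⟨A, z, rfl⟩ | ⟨R, z, rfl⟩
  · exact Or.inl ⟨A, σ z, rfl⟩
  · exact Or.inr ⟨R, σ z, rfl⟩

end NAt

namespace MonadicHead

variable {PU PB V : Type} {C D : Finset (NLit PU PB V)}

theorem of_forall_neg (h : ∀ l ∈ C, l.1 = false) : MonadicHead C := by
  intro l hl hpos
  simp [h l hl] at hpos

theorem isMonadic (hC : MonadicHead C) {a : NAt PU PB V} (ha : (true, a) ∈ C) : a.IsMonadic :=
  hC _ ha rfl

theorem mono (hD : MonadicHead D) (hCD : C ⊆ D) : MonadicHead C :=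
  fun l hl => hD l (hCD hl)

theorem union [DecidableEq PU] [DecidableEq PB] [DecidableEq V]
    (hC : MonadicHead C) (hD : MonadicHead D) : MonadicHead (C ∪ D) := by
  intro l hl
  rcases mem_union.1 hl with hl | hl
  exacts [hC l hl, hD l hl]

theorem image_substNLit [DecidableEq PU] [DecidableEq PB] [DecidableEq V]
    (hC : MonadicHead C) (σ : V → V) : MonadicHead (C.image (substNLit σ)) := by
  simp only [MonadicHead, mem_image]
  rintro _ ⟨l, hl, rfl⟩ hpos
  exact NAt.IsMonadic.substNAt (hC l hl hpos) σ

end MonadicHead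

namespace RoleRule

variable {PU PB V : Type} [DecidableEq PU] [DecidableEq PB] [DecidableEq V]
  {C : Finset (NLit PU PB V)}

theorem not_nonHorn (hC : RoleRule C) : ¬ NonHorn C := by
  obtain ⟨R, S, x, y, -, rfl | rfl⟩ := hC <;>
    simp [NonHorn, filter_insert, filter_singleton]

theorem monadicHead_erase_head (hC : RoleRule C) {A : NAt PU PB V} (hA : (true, A) ∈ C) :
    MonadicHead (C.erase (true, A)) := by
  refine MonadicHead.of_forall_neg fun l hl => ?_
  obtain ⟨R, S, x, y, -, rfl | rfl⟩ := hC <;>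
    simp only [mem_insert, mem_singleton, Prod.ext_iff] at hA <;>
    simp only [mem_erase, mem_insert, mem_singleton] at hl <;>
    rcases hl with ⟨hne, rfl | rfl⟩ <;> simp_all

theorem monadicHead_image (hC : RoleRule C) {B : NAt PU PB V} (hB : (false, B) ∈ C)
    {σ : V → V} (hσB : (substNAt σ B).IsMonadic) : MonadicHead (C.image (substNLit σ)) := by
  obtain ⟨R, S, x, y, -, rfl | rfl⟩ := hC <;>
    simp only [mem_insert, mem_singleton, Prod.ext_iff] at hB <;>
    obtain ⟨-, rfl⟩ := hB.resolve_right (by simp) <;>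
    have hσ : σ x = σ y := NAt.isMonadic_bin_iff.1 hσB <;>
    simp [MonadicHead, substNLit, substNAt, hσ]

end RoleRule

/-- nearly-monadic programs are closed under binary resolution: if `C₁`
and `C₂` are each a monadic-head rule or a role rule, at least one of them is
non-Horn, and `Cl` is a binary resolvent of `C₁` and `C₂`, then `Cl` is again a
monadic-head rule or a role rule. -/
theorem nearly_monadic_closed_under_resolution {PU PB V : Type}
    [DecidableEq PU] [DecidableEq PB] [DecidableEq V]
    (C₁ C₂ Cl : Finset (NLit PU PB V))
    (h1 : MonadicHead C₁ ∨ RoleRule C₁)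
    (h2 : MonadicHead C₂ ∨ RoleRule C₂)
    (hnh : NonHorn C₁ ∨ NonHorn C₂)
    (hres : Resolvent Cl C₁ C₂) :
    MonadicHead Cl ∨ RoleRule Cl := by
  obtain ⟨A, B, σ, hA, hB, ⟨hAB, -⟩, rfl⟩ := hres
  have hleft : MonadicHead ((C₁.erase (true, A)).image (substNLit σ)) := by
    rcases h1 with h1 | h1
    · exact (h1.image_substNLit σ).mono (image_subset_image (erase_subset _ _))
    · exact (h1.monadicHead_erase_head hA).image_substNLit σ
  have hright : MonadicHead ((C₂.erase (false, B)).image (substNLit σ)) := by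
    rcases h2 with h2 | h2
    · exact (h2.image_substNLit σ).mono (image_subset_image (erase_subset _ _))
    rcases h1 with h1 | h1
    · have hσB : (substNAt σ B).IsMonadic := hAB ▸ (h1.isMonadic hA).substNAt σ
      exact (h2.monadicHead_image hB hσB).mono (image_subset_image (erase_subset _ _))
    · exact (hnh.elim h1.not_nonHorn h2.not_nonHorn).elim
  rw [image_union]
  exact Or.inl (hleft.union hright)
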